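/- Let A : ℝⁿ → ℝ satisfy |A(y)| ≤ C r²(1+|y|)² and |DA(y)| ≤ C r²(1+|y|) for |y| ≤ δ/r, with A smooth and 1 + A > 0. Then there exists a smooth vector field ψ on {1 < |z| < δ'/r} satisfying z·ψ(z) = log(1+A(z)) with |ψ(z)| ≤ C' r² |z| and |Dψ(z)| ≤ C' r², where δ' > 0 and C' depend only on n, C, δ. -/

import Mathlib

open Real

theorem log_abs_bound {x : ℝ} (hx : |x| ≤ 1/2) : |Real.log (1+x)| ≤ 2 * |x| := by
  have h1 : -(1/2) ≤ x := neg_le_of_abs_le hx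
  have h2 : x ≤ 1/2 := le_of_abs_le hx
  have hpos : (0:ℝ) < 1 + x := by linarith
  rw [abs_le]
  constructor
  · have := Real.log_le_sub_one_of_pos (inv_pos.mpr hpos)
    rw [Real.log_inv] at this
    have hinv : (1+x)⁻¹ - 1 = -x / (1+x) := by field_simp; ring
    rw [hinv] at this
    have hb : -x / (1+x) ≤ 2 * |x| := by
      rw [div_le_iff₀ hpos]
      nlinarith [neg_le_abs x, abs_nonneg x]
    linarith
  · have := Real.log_le_sub_one_of_pos hpos
    calc Real.log (1+x) ≤ x := by linarith
      _ ≤ |x| := le_abs_self x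
      _ ≤ 2 * |x| := by nlinarith [abs_nonneg x]

set_option maxHeartbeats 1000000 in
/-- Construction of the vector field `ψ` with `z·ψ(z) = log(1+A(z))` and the
bounds `|ψ(z)| ≤ C' r² |z|`, `|Dψ(z)| ≤ C' r²` on the annulus `1 < |z| < δ'/r`,
where `δ'` and `C'` depend only on `n`, `C`, `δ`. -/
theorem stmt4 (n : ℕ) (C δ : ℝ) (hC : 0 < C) (hδ : 0 < δ) :
    ∃ δ' C' : ℝ, 0 < δ' ∧ 0 < C' ∧
    ∀ (r : ℝ) (A : EuclideanSpace ℝ (Fin n) → ℝ), 0 < r →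
      ContDiff ℝ (⊤ : ℕ∞) A → (∀ y, 0 < 1 + A y) →
      (∀ y : EuclideanSpace ℝ (Fin n), ‖y‖ ≤ δ / r → |A y| ≤ C * r^2 * (1 + ‖y‖)^2) →
      (∀ y : EuclideanSpace ℝ (Fin n), ‖y‖ ≤ δ / r → ‖fderiv ℝ A y‖ ≤ C * r^2 * (1 + ‖y‖)) →
      ∃ ψ : EuclideanSpace ℝ (Fin n) → EuclideanSpace ℝ (Fin n),
        ContDiffOn ℝ (⊤ : ℕ∞) ψ {z | 1 < ‖z‖ ∧ ‖z‖ < δ' / r} ∧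
        (∀ z : EuclideanSpace ℝ (Fin n), 1 < ‖z‖ → ‖z‖ < δ' / r →
          (inner ℝ z (ψ z) : ℝ) = Real.log (1 + A z)) ∧
        (∀ z : EuclideanSpace ℝ (Fin n), 1 < ‖z‖ → ‖z‖ < δ' / r →
          ‖ψ z‖ ≤ C' * r^2 * ‖z‖) ∧
        (∀ z : EuclideanSpace ℝ (Fin n), 1 < ‖z‖ → ‖z‖ < δ' / r →
          ‖fderiv ℝ ψ z‖ ≤ C' * r^2) := by
  set E := EuclideanSpace ℝ (Fin n)
  refine ⟨min δ (Real.sqrt (1/(8*C))), 28*C, lt_min hδ (Real.sqrt_pos.mpr (by positivity)),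
    by positivity, ?_⟩
  intro r A hr hAc hApos hAbd hDAbd
  set δ' := min δ (Real.sqrt (1/(8*C))) with hδ'def
  have hδ'pos : 0 < δ' := lt_min hδ (Real.sqrt_pos.mpr (by positivity))
  have hδ'δ : δ' ≤ δ := min_le_left _ _
  have hδ'sq : δ'^2 ≤ 1/(8*C) := by
    have h1 : δ' ≤ Real.sqrt (1/(8*C)) := min_le_right _ _
    calc δ'^2 ≤ (Real.sqrt (1/(8*C)))^2 := by
          apply pow_le_pow_left₀ hδ'pos.le h1
      _ = 1/(8*C) := Real.sq_sqrt (by positivity)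
  refine ⟨fun z => (Real.log (1 + A z) * (‖z‖^2)⁻¹) • z, ?_, ?_, ?_, ?_⟩
  · -- smoothness
    intro z hz
    apply ContDiffAt.contDiffWithinAt
    have hz1 : (1:ℝ) < ‖z‖ := hz.1
    have hn0 : ‖z‖^2 ≠ 0 := by positivity
    exact (((contDiffAt_const.add hAc.contDiffAt).log (ne_of_gt (hApos z))).mul
      (((contDiff_norm_sq ℝ).contDiffAt).inv hn0)).smul contDiffAt_id
  · -- inner product identity
    intro z hz1 hz2
    have hn0 : ‖z‖^2 ≠ 0 := by positivity
    rw [real_inner_smul_right, real_inner_self_eq_norm_sq]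
    field_simp
  · -- norm bound
    intro z hz1 hz2
    have ht0 : (0:ℝ) < ‖z‖ := by linarith
    have hδle : ‖z‖ ≤ δ / r := le_trans hz2.le (by gcongr)
    have hrt : ‖z‖ * r < δ' := (lt_div_iff₀ hr).mp hz2
    have key : (0:ℝ) ≤ C * r^2 * ((3*‖z‖+1) * (‖z‖-1)) :=
      mul_nonneg (by positivity) (mul_nonneg (by linarith) (by linarith))
    have hA2 : |A z| ≤ 4*C*r^2*‖z‖^2 := by
      have := hAbd z hδle
      nlinarith [key]
    have h2 : (‖z‖*r)^2 ≤ δ'^2 := by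
      nlinarith [mul_pos ht0 hr]
    have hAhalf : |A z| ≤ 1/2 := by
      calc |A z| ≤ 4*C*r^2*‖z‖^2 := hA2
        _ = 4*C*(‖z‖*r)^2 := by ring
        _ ≤ 4*C*δ'^2 := by nlinarith [h2]
        _ ≤ 4*C*(1/(8*C)) := by nlinarith [hδ'sq]
        _ = 1/2 := by field_simp; ring
    have hlog : |Real.log (1 + A z)| ≤ 8*C*r^2*‖z‖^2 := by
      calc |Real.log (1 + A z)| ≤ 2 * |A z| := log_abs_bound hAhalf
        _ ≤ 8*C*r^2*‖z‖^2 := by linarith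
    rw [norm_smul]
    have habs : ‖(Real.log (1 + A z) * (‖z‖^2)⁻¹ : ℝ)‖
        = |Real.log (1 + A z)| * (‖z‖^2)⁻¹ := by
      rw [Real.norm_eq_abs, abs_mul, abs_inv, abs_pow, abs_norm]
    rw [habs]
    have hb : |Real.log (1 + A z)| * (‖z‖^2)⁻¹ ≤ 8*C*r^2 := by
      rw [mul_inv_le_iff₀ (by positivity)]
      exact hlog
    calc |Real.log (1 + A z)| * (‖z‖^2)⁻¹ * ‖z‖ ≤ 8*C*r^2 * ‖z‖ :=
          mul_le_mul_of_nonneg_right hb ht0.le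
      _ ≤ 28*C*r^2*‖z‖ := by nlinarith [sq_nonneg r]
  · -- derivative bound
    intro z hz1 hz2
    have ht0 : (0:ℝ) < ‖z‖ := by linarith
    have hδle : ‖z‖ ≤ δ / r := le_trans hz2.le (by gcongr)
    have hrt : ‖z‖ * r < δ' := (lt_div_iff₀ hr).mp hz2
    have key : (0:ℝ) ≤ C * r^2 * ((3*‖z‖+1) * (‖z‖-1)) :=
      mul_nonneg (by positivity) (mul_nonneg (by linarith) (by linarith))
    have hA2 : |A z| ≤ 4*C*r^2*‖z‖^2 := by
      have := hAbd z hδle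
      nlinarith [key]
    have h2 : (‖z‖*r)^2 ≤ δ'^2 := by
      nlinarith [mul_pos ht0 hr]
    have hAhalf : |A z| ≤ 1/2 := by
      calc |A z| ≤ 4*C*r^2*‖z‖^2 := hA2
        _ = 4*C*(‖z‖*r)^2 := by ring
        _ ≤ 4*C*δ'^2 := by nlinarith [h2]
        _ ≤ 4*C*(1/(8*C)) := by nlinarith [hδ'sq]
        _ = 1/2 := by field_simp; ring
    have hlog : |Real.log (1 + A z)| ≤ 8*C*r^2*‖z‖^2 := by
      calc |Real.log (1 + A z)| ≤ 2 * |A z| := log_abs_bound hAhalf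
        _ ≤ 8*C*r^2*‖z‖^2 := by linarith
    have hn0 : ‖z‖^2 ≠ 0 := by positivity
    have h1A : 0 < 1 + A z := hApos z
    have hL : HasFDerivAt (fun x => Real.log (1 + A x))
        ((1 + A z)⁻¹ • fderiv ℝ A z) z :=
      (((hAc.differentiable (by simp) z).hasFDerivAt).const_add 1).log (ne_of_gt h1A)
    have hq : HasFDerivAt (fun x : E => ‖x‖^2) (2 • innerSL ℝ z) z :=
      (hasStrictFDerivAt_norm_sq z).hasFDerivAt
    have hinv : HasFDerivAt (fun x : E => (‖x‖^2)⁻¹)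
        ((-((‖z‖^2)^2)⁻¹) • (2 • innerSL ℝ z)) z :=
      (hasDerivAt_inv hn0).comp_hasFDerivAt z hq
    set L' : E →L[ℝ] ℝ := (1 + A z)⁻¹ • fderiv ℝ A z with hL'def
    set I' : E →L[ℝ] ℝ := (-((‖z‖^2)^2)⁻¹) • (2 • innerSL ℝ z) with hI'def
    set g' : E →L[ℝ] ℝ := Real.log (1 + A z) • I' + (‖z‖^2)⁻¹ • L' with hg'def
    have hg : HasFDerivAt (fun x : E => Real.log (1 + A x) * (‖x‖^2)⁻¹) g' z := hL.mul hinv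
    have hψ : HasFDerivAt (fun x : E => (Real.log (1 + A x) * (‖x‖^2)⁻¹) • x)
        ((Real.log (1 + A z) * (‖z‖^2)⁻¹) • ContinuousLinearMap.id ℝ E
          + g'.smulRight z) z := hg.smul (hasFDerivAt_id z)
    rw [hψ.fderiv]
    have key2 : (0:ℝ) ≤ C*r^2*(‖z‖-1) := mul_nonneg (by positivity) (by linarith)
    have hDA : ‖fderiv ℝ A z‖ ≤ 2*C*r^2*‖z‖ := by
      have := hDAbd z hδle
      linarith [key2]
    have hL'norm : ‖L'‖ ≤ 4*C*r^2*‖z‖ := by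
      have h1 : ‖(1 + A z)⁻¹‖ ≤ 2 := by
        rw [Real.norm_eq_abs, abs_inv, abs_of_pos h1A]
        have hge : (1:ℝ)/2 ≤ 1 + A z := by
          have := neg_le_of_abs_le hAhalf; linarith
        calc (1 + A z)⁻¹ ≤ ((1:ℝ)/2)⁻¹ := by
              apply inv_anti₀ (by norm_num) hge
          _ = 2 := by norm_num
      calc ‖L'‖ ≤ ‖(1 + A z)⁻¹‖ * ‖fderiv ℝ A z‖ := by
            rw [hL'def]; exact ContinuousLinearMap.opNorm_smul_le _ _
        _ ≤ 2 * (2*C*r^2*‖z‖) :=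
            mul_le_mul h1 hDA (norm_nonneg _) (by norm_num)
        _ = 4*C*r^2*‖z‖ := by ring
    have h2s : ‖(2 • innerSL ℝ z : E →L[ℝ] ℝ)‖ ≤ 2 * ‖z‖ := by
      rw [two_smul]
      calc ‖innerSL ℝ z + innerSL ℝ z‖ ≤ ‖innerSL ℝ z‖ + ‖innerSL ℝ z‖ := norm_add_le _ _
        _ = 2 * ‖z‖ := by rw [innerSL_apply_norm]; ring
    have hI'norm : ‖I'‖ ≤ 2 * ((‖z‖^2)^2)⁻¹ * ‖z‖ := by
      have habs : ‖(-((‖z‖^2)^2)⁻¹ : ℝ)‖ = ((‖z‖^2)^2)⁻¹ := by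
        rw [Real.norm_eq_abs, abs_neg, abs_inv, abs_of_nonneg (by positivity)]
      calc ‖I'‖ ≤ ‖(-((‖z‖^2)^2)⁻¹ : ℝ)‖ * ‖(2 • innerSL ℝ z : E →L[ℝ] ℝ)‖ := by
            rw [hI'def]; exact ContinuousLinearMap.opNorm_smul_le _ _
        _ = ((‖z‖^2)^2)⁻¹ * ‖(2 • innerSL ℝ z : E →L[ℝ] ℝ)‖ := by rw [habs]
        _ ≤ ((‖z‖^2)^2)⁻¹ * (2 * ‖z‖) :=
            mul_le_mul_of_nonneg_left h2s (by positivity)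
        _ = 2 * ((‖z‖^2)^2)⁻¹ * ‖z‖ := by ring
    have hg'norm : ‖g'‖ * ‖z‖ ≤ 20*C*r^2 := by
      have h1 : ‖g'‖ ≤ |Real.log (1 + A z)| * ‖I'‖ + (‖z‖^2)⁻¹ * ‖L'‖ := by
        rw [hg'def]
        calc ‖Real.log (1 + A z) • I' + (‖z‖^2)⁻¹ • L'‖
            ≤ ‖Real.log (1 + A z) • I'‖ + ‖(‖z‖^2)⁻¹ • L'‖ := norm_add_le _ _
          _ ≤ |Real.log (1 + A z)| * ‖I'‖ + (‖z‖^2)⁻¹ * ‖L'‖ := by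
              have e1 := ContinuousLinearMap.opNorm_smul_le (Real.log (1 + A z)) I'
              have e2 := ContinuousLinearMap.opNorm_smul_le ((‖z‖^2)⁻¹ : ℝ) L'
              rw [Real.norm_eq_abs] at e1
              rw [Real.norm_eq_abs, abs_inv,
                abs_of_nonneg (by positivity : (0:ℝ) ≤ ‖z‖^2)] at e2
              exact add_le_add e1 e2
      have hI2 : |Real.log (1 + A z)| * ‖I'‖ * ‖z‖ ≤ 16*C*r^2 := by
        have hmm := mul_le_mul hlog hI'norm (norm_nonneg I') (by positivity)
        calc |Real.log (1 + A z)| * ‖I'‖ * ‖z‖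
            ≤ (8*C*r^2*‖z‖^2) * (2 * ((‖z‖^2)^2)⁻¹ * ‖z‖) * ‖z‖ :=
              mul_le_mul_of_nonneg_right hmm ht0.le
          _ = 16*C*r^2 * (((‖z‖^2)^2) * ((‖z‖^2)^2)⁻¹) := by ring
          _ = 16*C*r^2 := by rw [mul_inv_cancel₀ (by positivity)]; ring
      have hL2 : (‖z‖^2)⁻¹ * ‖L'‖ * ‖z‖ ≤ 4*C*r^2 := by
        have h3 : (‖z‖^2)⁻¹ * ‖L'‖ ≤ (‖z‖^2)⁻¹ * (4*C*r^2*‖z‖) :=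
          mul_le_mul_of_nonneg_left hL'norm (by positivity)
        calc (‖z‖^2)⁻¹ * ‖L'‖ * ‖z‖ ≤ (‖z‖^2)⁻¹ * (4*C*r^2*‖z‖) * ‖z‖ :=
              mul_le_mul_of_nonneg_right h3 ht0.le
          _ = 4*C*r^2 * ((‖z‖^2) * (‖z‖^2)⁻¹) := by ring
          _ = 4*C*r^2 := by rw [mul_inv_cancel₀ hn0]; ring
      calc ‖g'‖ * ‖z‖ ≤ (|Real.log (1 + A z)| * ‖I'‖ + (‖z‖^2)⁻¹ * ‖L'‖) * ‖z‖ :=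
            mul_le_mul_of_nonneg_right h1 ht0.le
        _ = |Real.log (1 + A z)| * ‖I'‖ * ‖z‖ + (‖z‖^2)⁻¹ * ‖L'‖ * ‖z‖ := by ring
        _ ≤ 16*C*r^2 + 4*C*r^2 := add_le_add hI2 hL2
        _ = 20*C*r^2 := by ring
    have hgz : |Real.log (1 + A z) * (‖z‖^2)⁻¹| ≤ 8*C*r^2 := by
      rw [abs_mul, abs_inv, abs_of_nonneg (by positivity : (0:ℝ) ≤ ‖z‖^2)]
      rw [mul_inv_le_iff₀ (by positivity)]
      exact hlog
    calc ‖(Real.log (1 + A z) * (‖z‖^2)⁻¹) • ContinuousLinearMap.id ℝ E + g'.smulRight z‖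
        ≤ ‖(Real.log (1 + A z) * (‖z‖^2)⁻¹) • ContinuousLinearMap.id ℝ E‖
          + ‖g'.smulRight z‖ := norm_add_le _ _
      _ ≤ |Real.log (1 + A z) * (‖z‖^2)⁻¹| * 1 + ‖g'‖ * ‖z‖ := by
          have e1 : ‖(Real.log (1 + A z) * (‖z‖^2)⁻¹) • ContinuousLinearMap.id ℝ E‖
              ≤ |Real.log (1 + A z) * (‖z‖^2)⁻¹| * 1 := by
            refine (ContinuousLinearMap.opNorm_smul_le _ _).trans ?_
            rw [Real.norm_eq_abs]
            exact mul_le_mul_of_nonneg_left ContinuousLinearMap.norm_id_le (abs_nonneg _)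
          have e2 : ‖g'.smulRight z‖ ≤ ‖g'‖ * ‖z‖ := by
            rw [ContinuousLinearMap.norm_smulRight_apply]
          exact add_le_add e1 e2
      _ ≤ 8*C*r^2 + 20*C*r^2 := by
          rw [mul_one]; exact add_le_add hgz hg'norm
      _ = 28*C*r^2 := by ring
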